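/- Let X₁, …, X_M be independent {0,1}-valued random variables with P(X_i = 1) = p_i ∈ (0,1), let S = Σ_{i=1}^M X_i, and set l* = (1/M) Σ_{i=1}^M (1−p_i)/p_i. Then for every integer 1 ≤ n ≤ M, P(S = n−1)/P(S = n) ≤ l* · n / (M−n+1). -/

import Mathlib

/-- The probability that a string of independent `{0,1}`-valued random variables,
where the `i`-th has success probability `p i`, takes the value `x`. -/
noncomputable def bernProb {M : ℕ} (p : Fin M → ℝ) (x : Fin M → Bool) : ℝ :=
  ∏ i, if x i then p i else 1 - p i

/-- The number of ones in the binary string `x`. -/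
def onesCount {M : ℕ} (x : Fin M → Bool) : ℕ :=
  (Finset.univ.filter (fun i => x i = true)).card

/-- `P(S = n)` where `S = Σᵢ Xᵢ` is the sum of the independent `{0,1}`-valued variables. -/
noncomputable def probSum {M : ℕ} (p : Fin M → ℝ) (n : ℕ) : ℝ :=
  ∑ x : Fin M → Bool, if onesCount x = n then bernProb p x else 0

open Finset

noncomputable def Wgt {M : ℕ} (p : Fin M → ℝ) (n : ℕ) (i : Fin M) : ℝ :=
  ∑ x : Fin M → Bool, if onesCount x = n ∧ x i = true then bernProb p x else 0

section aux
variable {M : ℕ} {p : Fin M → ℝ}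

lemma bernProb_pos (hp : ∀ i, p i ∈ Set.Ioo (0:ℝ) 1) (x : Fin M → Bool) : 0 < bernProb p x := by
  refine Finset.prod_pos fun i _ => ?_
  rcases hp i with ⟨h0, h1⟩
  by_cases h : x i <;> simp [h] <;> linarith

lemma onesCount_le (x : Fin M → Bool) : onesCount x ≤ M := by
  have := Finset.card_filter_le (Finset.univ : Finset (Fin M)) (fun i => x i = true)
  simpa [onesCount] using this

lemma probSum_pos (hp : ∀ i, p i ∈ Set.Ioo (0:ℝ) 1) {n : ℕ} (hn : n ≤ M) : 0 < probSum p n := by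
  have hex : onesCount (fun i : Fin M => decide ((i : ℕ) < n)) = n := by
    unfold onesCount
    have : (univ.filter fun i : Fin M => (decide ((i:ℕ) < n)) = true)
        = (Finset.range n).attachFin (fun m hm => lt_of_lt_of_le (Finset.mem_range.1 hm) hn) := by
      ext i
      simp [Finset.mem_attachFin]
    rw [this, Finset.card_attachFin, Finset.card_range]
  refine Finset.sum_pos' (fun x _ => ?_) ⟨fun i : Fin M => decide ((i : ℕ) < n), Finset.mem_univ _, ?_⟩
  · split
    · exact le_of_lt (bernProb_pos hp _)
    · exact le_refl 0
  · rw [if_pos hex]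
    exact bernProb_pos hp _

lemma onesCount_update_true (x : Fin M → Bool) (i : Fin M) (h : x i = false) :
    onesCount (Function.update x i true) = onesCount x + 1 := by
  unfold onesCount
  have hset : (univ.filter fun k => Function.update x i true k = true)
      = insert i (univ.filter fun k => x k = true) := by
    ext k
    by_cases hk : k = i <;> simp [Function.update_apply, hk, h]
  rw [hset, Finset.card_insert_of_notMem (by simp [h])]

lemma bernProb_update_true (hp : ∀ i, p i ∈ Set.Ioo (0:ℝ) 1) (x : Fin M → Bool) (i : Fin M) (h : x i = false) :
    bernProb p x = ((1 - p i) / p i) * bernProb p (Function.update x i true) := by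
  have hpi := (hp i).1
  unfold bernProb
  rw [← Finset.mul_prod_erase univ _ (Finset.mem_univ i),
      ← Finset.mul_prod_erase univ (fun k => if Function.update x i true k then p k else 1 - p k)
        (Finset.mem_univ i)]
  have hrest : (∏ k ∈ univ.erase i, if Function.update x i true k then p k else 1 - p k)
      = ∏ k ∈ univ.erase i, if x k then p k else 1 - p k := by
    refine Finset.prod_congr rfl fun k hk => ?_
    rw [Function.update_of_ne (Finset.ne_of_mem_erase hk)]
  rw [hrest]
  simp only [h, Function.update_self, if_true, Bool.false_eq_true, if_false]
  field_simp

lemma count_false_card (x : Fin M → Bool) :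
    (univ.filter fun i => x i = false).card = M - onesCount x := by
  have : (univ.filter fun i => x i = false) = univ \ (univ.filter fun i => x i = true) := by
    ext i; by_cases h : x i <;> simp [h]
  rw [this, Finset.card_sdiff_of_subset (Finset.filter_subset _ _)]
  simp [onesCount]

lemma lemC (hp : ∀ i, p i ∈ Set.Ioo (0:ℝ) 1) (m : ℕ) :
    ((M - m : ℕ) : ℝ) * probSum p m = ∑ i, ((1 - p i) / p i) * Wgt p (m + 1) i := by
  have hL : ((M - m : ℕ) : ℝ) * probSum p m
      = ∑ z ∈ (univ : Finset ((Fin M → Bool) × Fin M)).filter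
          (fun z => onesCount z.1 = m ∧ z.1 z.2 = false), bernProb p z.1 := by
    rw [Finset.sum_filter, Fintype.sum_prod_type]
    rw [probSum, Finset.mul_sum]
    refine Finset.sum_congr rfl fun x _ => ?_
    by_cases hc : onesCount x = m
    · simp only [hc, if_true, true_and]
      rw [← Finset.sum_filter, Finset.sum_const, count_false_card, hc, nsmul_eq_mul]
    · simp [hc]
  have hR : (∑ i, ((1 - p i) / p i) * Wgt p (m + 1) i)
      = ∑ z ∈ (univ : Finset ((Fin M → Bool) × Fin M)).filter
          (fun z => onesCount z.1 = m + 1 ∧ z.1 z.2 = true),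
          ((1 - p z.2) / p z.2) * bernProb p z.1 := by
    rw [Finset.sum_filter, Fintype.sum_prod_type, Finset.sum_comm]
    refine Finset.sum_congr rfl fun i _ => ?_
    rw [Wgt, Finset.mul_sum]
    refine Finset.sum_congr rfl fun x _ => ?_
    by_cases hc : onesCount x = m + 1 ∧ x i = true <;> simp [hc]
  rw [hL, hR]
  refine Finset.sum_nbij' (fun z => (Function.update z.1 z.2 true, z.2))
    (fun z => (Function.update z.1 z.2 false, z.2)) ?_ ?_ ?_ ?_ ?_
  · rintro ⟨x, i⟩ hz
    simp only [Finset.mem_filter, Finset.mem_univ, true_and] at hz ⊢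
    exact ⟨by rw [onesCount_update_true x i hz.2, hz.1], Function.update_self _ _ _⟩
  · rintro ⟨x, i⟩ hz
    simp only [Finset.mem_filter, Finset.mem_univ, true_and] at hz ⊢
    constructor
    · have hfix : Function.update (Function.update x i false) i true = x := by
        rw [Function.update_idem, ← hz.2, Function.update_eq_self]
      have := onesCount_update_true (Function.update x i false) i (Function.update_self _ _ _)
      rw [hfix, hz.1] at this
      omega
    · exact Function.update_self _ _ _
  · rintro ⟨x, i⟩ hz
    simp only [Finset.mem_filter, Finset.mem_univ, true_and] at hz
    simp only [Prod.mk.injEq]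
    exact ⟨by rw [Function.update_idem, ← hz.2, Function.update_eq_self], trivial⟩
  · rintro ⟨x, i⟩ hz
    simp only [Finset.mem_filter, Finset.mem_univ, true_and] at hz
    simp only [Prod.mk.injEq]
    exact ⟨by rw [Function.update_idem, ← hz.2, Function.update_eq_self], trivial⟩
  · rintro ⟨x, i⟩ hz
    simp only [Finset.mem_filter, Finset.mem_univ, true_and] at hz
    exact bernProb_update_true hp x i hz.2

lemma lemE (n : ℕ) : (∑ i, Wgt p n i) = (n : ℝ) * probSum p n := by
  unfold Wgt
  rw [Finset.sum_comm, probSum, Finset.mul_sum]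
  refine Finset.sum_congr rfl fun x _ => ?_
  by_cases hc : onesCount x = n
  · simp only [hc, true_and, if_true]
    rw [← Finset.sum_filter, Finset.sum_const, nsmul_eq_mul]
    rw [show (univ.filter fun i => x i = true).card = n from hc]
  · simp [hc]

lemma bernProb_factor {i j : Fin M} (hij : i ≠ j) (x : Fin M → Bool) :
    bernProb p x = (if x i then p i else 1 - p i) * (if x j then p j else 1 - p j) *
      ∏ k ∈ univ \ {i, j}, (if x k then p k else 1 - p k) := by
  rw [bernProb, ← Finset.prod_sdiff (Finset.subset_univ ({i, j} : Finset (Fin M))),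
    Finset.prod_pair hij]
  ring

lemma onesCount_swap {i j : Fin M} (hij : i ≠ j) (x : Fin M → Bool)
    (hxi : x i = false) (hxj : x j = true) :
    onesCount (Function.update (Function.update x i true) j false) = onesCount x := by
  set y := Function.update x j false with hy
  have hyj : y j = false := Function.update_self _ _ _
  have hyi : y i = false := by rw [hy, Function.update_of_ne hij, hxi]
  have h1 : onesCount x = onesCount y + 1 := by
    have hx : x = Function.update y j true := by
      rw [hy, Function.update_idem, ← hxj, Function.update_eq_self]
    conv_lhs => rw [hx]
    rw [onesCount_update_true y j hyj]
  have h2 : Function.update (Function.update x i true) j false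
      = Function.update y i true := by
    rw [Function.update_comm hij, hy]
  rw [h2, onesCount_update_true y i hyi, h1]

lemma helperA {i j : Fin M} (hij : i ≠ j) (n : ℕ) (a b : Bool) :
    ∑ x ∈ univ.filter (fun x => onesCount x = n ∧ x i = a ∧ x j = b), bernProb p x
    = (if a then p i else 1 - p i) * (if b then p j else 1 - p j) *
      ∑ x ∈ univ.filter (fun x => onesCount x = n ∧ x i = a ∧ x j = b),
        ∏ k ∈ univ \ {i, j}, (if x k then p k else 1 - p k) := by
  rw [Finset.mul_sum]
  refine Finset.sum_congr rfl fun x hx => ?_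
  simp only [Finset.mem_filter] at hx
  obtain ⟨-, -, hxi, hxj⟩ := hx
  rw [bernProb_factor hij x, hxi, hxj]

lemma helperB {i j : Fin M} (hij : i ≠ j) (n : ℕ) :
    ∑ x ∈ univ.filter (fun x => onesCount x = n ∧ x i = false ∧ x j = true),
        ∏ k ∈ univ \ {i, j}, (if x k then p k else 1 - p k)
    = ∑ x ∈ univ.filter (fun x => onesCount x = n ∧ x i = true ∧ x j = false),
        ∏ k ∈ univ \ {i, j}, (if x k then p k else 1 - p k) := by
  refine Finset.sum_nbij' (fun x => Function.update (Function.update x i true) j false)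
    (fun x => Function.update (Function.update x j true) i false) ?_ ?_ ?_ ?_ ?_
  · intro x hx
    simp only [Finset.mem_filter, Finset.mem_univ, true_and] at hx ⊢
    obtain ⟨h1, h2, h3⟩ := hx
    refine ⟨by rw [onesCount_swap hij x h2 h3, h1], ?_, Function.update_self _ _ _⟩
    rw [Function.update_of_ne hij, Function.update_self]
  · intro x hx
    simp only [Finset.mem_filter, Finset.mem_univ, true_and] at hx ⊢
    obtain ⟨h1, h2, h3⟩ := hx
    refine ⟨by rw [onesCount_swap hij.symm x h3 h2, h1], Function.update_self _ _ _, ?_⟩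
    rw [Function.update_of_ne hij.symm, Function.update_self]
  · intro x hx
    simp only [Finset.mem_filter, Finset.mem_univ, true_and] at hx
    obtain ⟨h1, h2, h3⟩ := hx
    funext k
    by_cases hki : k = i <;> by_cases hkj : k = j <;>
      simp [Function.update_apply, hki, hkj, hij, hij.symm, h2, h3]
  · intro x hx
    simp only [Finset.mem_filter, Finset.mem_univ, true_and] at hx
    obtain ⟨h1, h2, h3⟩ := hx
    funext k
    by_cases hki : k = i <;> by_cases hkj : k = j <;>
      simp [Function.update_apply, hki, hkj, hij, hij.symm, h2, h3]
  · intro x hx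
    refine Finset.prod_congr rfl fun k hk => ?_
    simp only [Finset.mem_sdiff, Finset.mem_insert, Finset.mem_singleton] at hk
    push_neg at hk
    simp [Function.update_apply, hk.2.1, hk.2.2]

lemma lemD (hp : ∀ i, p i ∈ Set.Ioo (0:ℝ) 1) (n : ℕ) (i j : Fin M) :
    ((1 - p i) / p i - (1 - p j) / p j) * (Wgt p n i - Wgt p n j) ≤ 0 := by
  rcases eq_or_ne i j with rfl | hij
  · simp
  have hpi := hp i
  have hpj := hp j
  have hWi : Wgt p n i
      = (∑ x ∈ univ.filter (fun x => onesCount x = n ∧ x i = true ∧ x j = true),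
          bernProb p x)
      + ∑ x ∈ univ.filter (fun x => onesCount x = n ∧ x i = true ∧ x j = false),
          bernProb p x := by
    rw [Wgt, Finset.sum_filter, Finset.sum_filter, ← Finset.sum_add_distrib]
    refine Finset.sum_congr rfl fun x _ => ?_
    rcases Bool.dichotomy (x j) with hj | hj <;> rcases Bool.dichotomy (x i) with hi | hi <;>
      by_cases h1 : onesCount x = n <;> simp [hi, hj, h1]
  have hWj : Wgt p n j
      = (∑ x ∈ univ.filter (fun x => onesCount x = n ∧ x i = true ∧ x j = true),
          bernProb p x)
      + ∑ x ∈ univ.filter (fun x => onesCount x = n ∧ x i = false ∧ x j = true),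
          bernProb p x := by
    rw [Wgt, Finset.sum_filter, Finset.sum_filter, ← Finset.sum_add_distrib]
    refine Finset.sum_congr rfl fun x _ => ?_
    rcases Bool.dichotomy (x j) with hj | hj <;> rcases Bool.dichotomy (x i) with hi | hi <;>
      by_cases h1 : onesCount x = n <;> simp [hi, hj, h1]
  set G := ∑ x ∈ univ.filter (fun x => onesCount x = n ∧ x i = true ∧ x j = false),
      ∏ k ∈ univ \ {i, j}, (if x k then p k else 1 - p k) with hG
  have hGnonneg : 0 ≤ G := by
    refine Finset.sum_nonneg fun x _ => Finset.prod_nonneg fun k _ => ?_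
    rcases hp k with ⟨h0, h1⟩
    by_cases h : x k <;> simp [h] <;> linarith
  have hdiff : Wgt p n i - Wgt p n j = (p i - p j) * G := by
    have hA1 := helperA (p := p) hij n true false
    have hA2 := helperA (p := p) hij n false true
    simp only [Bool.false_eq_true, if_true, if_false, ite_true, ite_false] at hA1 hA2
    rw [hWi, hWj, hA1, hA2, helperB hij n, ← hG]
    ring
  have hi0 : p i ≠ 0 := ne_of_gt hpi.1
  have hj0 : p j ≠ 0 := ne_of_gt hpj.1
  have hq : (1 - p i) / p i - (1 - p j) / p j = (p j - p i) / (p i * p j) := by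
    field_simp
    ring
  rw [hdiff, hq]
  have key : (p j - p i) / (p i * p j) * ((p i - p j) * G)
      = -((p i - p j) ^ 2 * G / (p i * p j)) := by
    field_simp
    ring
  rw [key, neg_nonpos]
  exact div_nonneg (mul_nonneg (sq_nonneg _) hGnonneg) (mul_pos hpi.1 hpj.1).le

lemma cheb (hp : ∀ i, p i ∈ Set.Ioo (0:ℝ) 1) (n : ℕ) :
    (M : ℝ) * ∑ i, ((1 - p i) / p i) * Wgt p n i
      ≤ (∑ i, (1 - p i) / p i) * ∑ i, Wgt p n i := by
  have h : (∑ i, ∑ j, ((1 - p i) / p i - (1 - p j) / p j) * (Wgt p n i - Wgt p n j)) ≤ 0 :=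
    Finset.sum_nonpos fun i _ => Finset.sum_nonpos fun j _ => lemD hp n i j
  have expand : (∑ i, ∑ j, ((1 - p i) / p i - (1 - p j) / p j) * (Wgt p n i - Wgt p n j))
      = 2 * ((M : ℝ) * ∑ i, ((1 - p i) / p i) * Wgt p n i)
        - 2 * ((∑ i, (1 - p i) / p i) * ∑ i, Wgt p n i) := by
    simp only [sub_mul, mul_sub, Finset.sum_sub_distrib, Finset.sum_const, Finset.card_univ,
      Fintype.card_fin, nsmul_eq_mul, ← Finset.sum_mul, ← Finset.mul_sum]
    ring
  linarith [expand ▸ h]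

end aux

/-- for independent `{0,1}`-valued `X₁,…,X_M` with `P(Xᵢ=1) = pᵢ ∈ (0,1)`,
`S = ΣXᵢ` and `l* = (1/M)Σ (1−pᵢ)/pᵢ`, for every `1 ≤ n ≤ M`:
`P(S=n−1)/P(S=n) ≤ l*·n/(M−n+1)`. -/
theorem stmt12 (M : ℕ) (p : Fin M → ℝ) (hp : ∀ i, p i ∈ Set.Ioo (0:ℝ) 1)
    (n : ℕ) (hn1 : 1 ≤ n) (hnM : n ≤ M) :
    probSum p (n - 1) / probSum p n ≤
      ((∑ i, (1 - p i) / p i) / M) * (n : ℝ) / ((M : ℝ) - n + 1) := by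
  have hM : 0 < M := lt_of_lt_of_le hn1 hnM
  have hMR : (0:ℝ) < M := by exact_mod_cast hM
  have hnR : (n : ℝ) ≤ M := by exact_mod_cast hnM
  have hP : 0 < probSum p n := probSum_pos hp hnM
  have hD : (0:ℝ) < (M:ℝ) - n + 1 := by linarith
  have key : (M:ℝ) * (((M:ℝ) - n + 1) * probSum p (n-1))
      ≤ (∑ i, (1 - p i) / p i) * ((n:ℝ) * probSum p n) := by
    have hC := lemC hp (n - 1)
    have h1 : n - 1 ≤ M := le_trans (Nat.sub_le _ _) hnM
    have hcast : ((M - (n-1) : ℕ) : ℝ) = (M:ℝ) - n + 1 := by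
      rw [Nat.cast_sub h1, Nat.cast_sub hn1]
      push_cast
      ring
    have hm1 : n - 1 + 1 = n := Nat.succ_pred_eq_of_pos hn1
    rw [hcast, hm1] at hC
    calc (M:ℝ) * (((M:ℝ) - n + 1) * probSum p (n-1))
        = (M:ℝ) * ∑ i, ((1 - p i) / p i) * Wgt p n i := by rw [hC]
      _ ≤ (∑ i, (1 - p i) / p i) * ∑ i, Wgt p n i := cheb hp n
      _ = (∑ i, (1 - p i) / p i) * ((n:ℝ) * probSum p n) := by rw [lemE]
  rw [div_le_div_iff₀ hP hD, div_mul_eq_mul_div, div_mul_eq_mul_div, le_div_iff₀ hMR]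
  linear_combination key
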